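/- arXiv:1909.05457 — 2 statements merged into one kernel-verified Lean document; each statement's English description precedes it below -/
import Mathlib

section
/- In the setting of the previous theorem, if additionally ⪰* ∈ P rationalizes the entire choice function c (for every x,y ∈ X, c({x,y}) ⪰* x and c({x,y}) ⪰* y), and for every n the preference ⪰_n ∈ P rationalizes the observed choices on Σ_n, then ⪰_n → ⪰* in the closed convergence topology. -/
open Filter Topology MeasureTheory

/-- A binary relation on `X`, viewed as a set of pairs, is complete. -/
def CompleteRel {X : Type*} (R : Set (X × X)) : Prop :=
  ∀ x y : X, (x, y) ∈ R ∨ (y, x) ∈ R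

/-- The strict part of a relation. -/
def StrictPref {X : Type*} (R : Set (X × X)) (x y : X) : Prop :=
  (x, y) ∈ R ∧ (y, x) ∉ R

/-- A relation is locally strict. -/
def LocallyStrict {X : Type*} [TopologicalSpace X] (R : Set (X × X)) : Prop :=
  ∀ x y : X, (x, y) ∈ R → ∀ V ∈ 𝓝 ((x, y) : X × X), ∃ p ∈ V, StrictPref R p.1 p.2

/-- Convergence of a sequence of relations in the closed convergence topology. -/
def ClosedConv {X : Type*} [TopologicalSpace X] (R : ℕ → Set (X × X)) (S : Set (X × X)) : Prop :=
  (∀ p ∈ S, ∃ u : ℕ → X × X, Tendsto u atTop (𝓝 p) ∧ ∀ n, u n ∈ R n) ∧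
  (∀ φ : ℕ → ℕ, StrictMono φ → ∀ u : ℕ → X × X, (∀ k, u k ∈ R (φ k)) →
    ∀ p : X × X, Tendsto u atTop (𝓝 p) → p ∈ S)

/-- Grodal transitivity: `x ⪰ y ≻ z ⪰ w` implies `x ⪰ w`. -/
def GrodalTrans {X : Type*} (R : Set (X × X)) : Prop :=
  ∀ x y z w : X, (x, y) ∈ R → StrictPref R y z → (z, w) ∈ R → (x, w) ∈ R

/-- Strict monotonicity with respect to a dominance relation `D`. -/
def StrictMonoWrt {X : Type*} (R : Set (X × X)) (D : Set (X × X)) : Prop :=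
  ∀ x y : X, (x, y) ∈ D → StrictPref R x y

/-- The relation `R` rationalizes the observed choices on the experiment consisting of
the first `n` binary choice problems `B 0, …, B (n-1)`. -/
def RationalizesOn {X : Type*} (R : Set (X × X)) (c : Sym2 X → X) (B : ℕ → Sym2 X)
    (n : ℕ) : Prop :=
  ∀ k < n, ∀ x ∈ B k, (c (B k), x) ∈ R

/-- The nested sequence of experiments determined by `B` is exhaustive. -/
def Exhaustive {X : Type*} [TopologicalSpace X] (B : ℕ → Sym2 X) : Prop :=
  Dense {x : X | ∃ k, x ∈ B k} ∧
  ∀ x y : X, x ≠ y → (∃ k, x ∈ B k) → (∃ k, y ∈ B k) → ∃ k, B k = Sym2.mk x y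

/-! The observed choices pin down `⪰*` off its graph: if `(x, y) ∉ ⪰*`, then every data pair
`{x', y'}` near `{x, y}` has `y'` chosen, so `(y', x')` lies in all but finitely many `⪰ₙ`.
Hence any point of `⪰*` is approximated by points of `⪰ₙ`, using local strictness of `⪰*` to
move to a nearby point where it is strict. Conversely, if a limit of points of a subsequence of
`⪰ₙ` escaped `⪰*`, pass (by compactness of the closed convergence topology) to a further
subsequence converging to some `S ∈ P`; then `S` contains every `(y, x)` with `(x, y) ∉ ⪰*`,
which contradicts local strictness of `S` at that limit point. -/

section ClosedConvergence

theorem exists_tendsto_forall_mem_of_eventually_inter_nonempty {Y : Type*} [TopologicalSpace Y]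
    [FirstCountableTopology Y] {C : ℕ → Set Y} (hC : ∀ n, (C n).Nonempty) {p : Y}
    (h : ∀ O ∈ 𝓝 p, ∀ᶠ n in atTop, (C n ∩ O).Nonempty) :
    ∃ u : ℕ → Y, Tendsto u atTop (𝓝 p) ∧ ∀ n, u n ∈ C n := by
  classical
  obtain ⟨W, hW⟩ := (𝓝 p).exists_antitone_basis
  -- pick `u n` in the smallest `W j`, `j ≤ n`, that meets `C n`
  have hsel : ∀ n, ∃ y ∈ C n, ∀ j ≤ n, (C n ∩ W j).Nonempty → y ∈ W j := by
    intro n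
    by_cases hex : ∃ j ≤ n, (C n ∩ W j).Nonempty
    · obtain ⟨j, hjn, hj⟩ := hex
      obtain ⟨y, hyC, hyW⟩ :=
        Nat.findGreatest_spec (P := fun j => (C n ∩ W j).Nonempty) hjn hj
      exact ⟨y, hyC, fun i hin hi => hW.antitone (Nat.le_findGreatest hin hi) hyW⟩
    · obtain ⟨y, hy⟩ := hC n
      exact ⟨y, hy, fun j hjn hj => (hex ⟨j, hjn, hj⟩).elim⟩
  choose u huC huW using hsel
  refine ⟨u, hW.1.tendsto_right_iff.2 fun j _ => ?_, huC⟩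
  filter_upwards [eventually_ge_atTop j, h (W j) (hW.mem j)] with n hjn hn
  exact huW n j hjn hn

theorem CompleteRel.mem_diag {X : Type*} {R : Set (X × X)} (hR : CompleteRel R) (x : X) :
    (x, x) ∈ R :=
  (hR x x).elim id id

variable {X : Type*} [TopologicalSpace X]

theorem ClosedConv.mem_of_eventually_mem {R : ℕ → Set (X × X)} {S : Set (X × X)}
    (hRS : ClosedConv R S) {q : X × X} (hq : ∀ᶠ n in atTop, q ∈ R n) : q ∈ S := by
  obtain ⟨m, hm⟩ := eventually_atTop.1 hq
  exact hRS.2 (· + m) (strictMono_id.add_const m) (fun _ => q)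
    (fun k => hm _ (Nat.le_add_left m k)) q tendsto_const_nhds

theorem exists_strictMono_closedConv [SecondCountableTopology X] (C : ℕ → Set (X × X))
    (hC : ∀ n, (C n).Nonempty) :
    ∃ ψ : ℕ → ℕ, StrictMono ψ ∧
      ∃ S, IsClosed S ∧ ClosedConv (fun k => C (ψ k)) S := by
  classical
  let 𝓑 := TopologicalSpace.countableBasis (X × X)
  have h𝓑 := TopologicalSpace.isBasis_countableBasis (X × X)
  have : Countable 𝓑 := (TopologicalSpace.countable_countableBasis (X × X)).to_subtype
  -- which basic open sets `C k` meets is a point of the compact Cantor space `𝓑 → Bool`;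
  -- a convergent subsequence of these points determines the limit `S`
  obtain ⟨g, ψ, hψ, hg⟩ := CompactSpace.tendsto_subseq
    fun k (O : 𝓑) => decide (C k ∩ O).Nonempty
  have hgO : ∀ O : 𝓑, ∀ᶠ k in atTop, decide (C (ψ k) ∩ O).Nonempty = g O := fun O => by
    have hO := tendsto_pi_nhds.1 hg O
    rw [nhds_discrete] at hO
    exact tendsto_pure.1 hO
  let S : Set (X × X) := {q | ∀ O : 𝓑, q ∈ (O : Set (X × X)) → g O = true}
  refine ⟨ψ, hψ, S, ?_, ?_, ?_⟩
  · refine isOpen_compl_iff.1 (isOpen_iff_forall_mem_open.2 fun q hq => ?_)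
    obtain ⟨O, hqO, hgO⟩ : ∃ O : 𝓑, q ∈ (O : Set (X × X)) ∧ g O ≠ true := by
      simpa [S] using hq
    exact ⟨O, fun q' hq' hq'S => hgO (hq'S O hq'), h𝓑.isOpen O.2, hqO⟩
  · intro q hq
    refine exists_tendsto_forall_mem_of_eventually_inter_nonempty (fun k => hC (ψ k))
      fun N hN => ?_
    obtain ⟨O, hO𝓑, hqO, hON⟩ := h𝓑.mem_nhds_iff.1 hN
    filter_upwards [hgO ⟨O, hO𝓑⟩] with k hk
    have hk' : (C (ψ k) ∩ O).Nonempty := by simpa [hq ⟨O, hO𝓑⟩ hqO] using hk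
    exact hk'.mono (Set.inter_subset_inter_right _ hON)
  · intro σ hσ u hu q hq O hqO
    have hmeet : ∀ᶠ j in atTop, (C (ψ (σ j)) ∩ O).Nonempty :=
      (hq.eventually_mem ((h𝓑.isOpen O.2).mem_nhds hqO)).mono fun j hj => ⟨u j, hu j, hj⟩
    obtain ⟨j, hj, hjg⟩ := (hmeet.and (hσ.tendsto_atTop.eventually (hgO O))).exists
    simpa [hj] using hjg.symm

end ClosedConvergence

section Rationalization

variable {X : Type*} [TopologicalSpace X] {B : ℕ → Sym2 X} {c : Sym2 X → X}
  {Sstar : Set (X × X)} {R : ℕ → Set (X × X)}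

theorem exists_mem_eventually_swap_mem (hB : Exhaustive B) (hc : ∀ z : Sym2 X, c z ∈ z)
    (hrat : ∀ x y : X, (c s(x, y), x) ∈ Sstar ∧ (c s(x, y), y) ∈ Sstar)
    (hR : ∀ n, RationalizesOn (R n) c B n) {W : Set (X × X)} (hWo : IsOpen W)
    (hWne : W.Nonempty) (hWS : Disjoint W Sstar) :
    ∃ q ∈ W, ∀ᶠ n in atTop, q.swap ∈ R n := by
  obtain ⟨⟨x, y⟩, ⟨hx, hy⟩, hxyW⟩ := (hB.1.prod hB.1).exists_mem_open hWo hWne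
  have hxyS : (x, y) ∉ Sstar := Set.disjoint_left.1 hWS hxyW
  have hcy : c s(x, y) = y := by
    rcases Sym2.mem_iff.1 (hc s(x, y)) with hcx | hcy
    · exact absurd (hcx ▸ (hrat x y).2) hxyS
    · exact hcy
  have hxy : x ≠ y := by
    rintro rfl
    exact hxyS (by simpa [hcy] using (hrat x x).1)
  obtain ⟨m, hm⟩ := hB.2 x y hxy hx hy
  refine ⟨(x, y), hxyW, (eventually_gt_atTop m).mono fun n hn => ?_⟩
  simpa [hm, hcy] using hR n m hn x (hm ▸ Sym2.mem_mk_left x y)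

theorem swap_mem_of_closedConv (hB : Exhaustive B) (hc : ∀ z : Sym2 X, c z ∈ z)
    (hrat : ∀ x y : X, (c s(x, y), x) ∈ Sstar ∧ (c s(x, y), y) ∈ Sstar)
    (hR : ∀ n, RationalizesOn (R n) c B n) (hSstar : IsClosed Sstar) {φ : ℕ → ℕ}
    (hφ : Tendsto φ atTop atTop) {S : Set (X × X)} (hS : IsClosed S)
    (hRS : ClosedConv (fun k => R (φ k)) S) {q : X × X} (hq : q ∉ Sstar) : q.swap ∈ S := by
  rw [← hS.closure_eq, mem_closure_iff]
  intro N hN hqN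
  obtain ⟨q', ⟨hq'N, -⟩, hq'R⟩ := exists_mem_eventually_swap_mem hB hc hrat hR
    ((hN.preimage continuous_swap).inter hSstar.isOpen_compl) ⟨q, hqN, hq⟩
    (disjoint_compl_left.mono_left Set.inter_subset_right)
  exact ⟨q'.swap, hq'N, hRS.mem_of_eventually_mem (hφ.eventually hq'R)⟩

end Rationalization

theorem stmt4_general {X : Type*} [TopologicalSpace X] [PolishSpace X]
    (P : Set (Set (X × X)))
    (hP : ∀ R ∈ P, CompleteRel R ∧ IsClosed R ∧ LocallyStrict R)
    (hPclosed : ∀ (R : ℕ → Set (X × X)), (∀ n, R n ∈ P) →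
      ∀ S : Set (X × X), IsClosed S → ClosedConv R S → S ∈ P)
    (B : ℕ → Sym2 X) (hBex : Exhaustive B)
    (c : Sym2 X → X) (hc : ∀ z : Sym2 X, c z ∈ z)
    (Sstar : Set (X × X)) (hSstar : Sstar ∈ P)
    (hrat : ∀ x y : X, (c (Sym2.mk x y), x) ∈ Sstar ∧ (c (Sym2.mk x y), y) ∈ Sstar)
    (R : ℕ → Set (X × X))
    (hR : ∀ n, R n ∈ P ∧ RationalizesOn (R n) c B n) :
    ClosedConv R Sstar := by
  obtain ⟨-, hSclosed, hSstrict⟩ := hP Sstar hSstar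
  have hRat : ∀ n, RationalizesOn (R n) c B n := fun n => (hR n).2
  have hRne : ∀ p : X × X, ∀ n, (R n).Nonempty := fun p n =>
    ⟨(p.1, p.1), (hP _ (hR n).1).1.mem_diag p.1⟩
  constructor
  · intro p hp
    refine exists_tendsto_forall_mem_of_eventually_inter_nonempty (hRne p) fun O hO => ?_
    obtain ⟨p', hp'O, hp'⟩ := hSstrict p.1 p.2 hp (interior O) (interior_mem_nhds.2 hO)
    obtain ⟨q, ⟨hqO, -⟩, hqR⟩ := exists_mem_eventually_swap_mem hBex hc hrat hRat
      (isOpen_interior.preimage continuous_swap |>.inter hSclosed.isOpen_compl)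
      ⟨p'.swap, hp'O, hp'.2⟩
      (disjoint_compl_left.mono_left Set.inter_subset_right)
    exact hqR.mono fun n hn => ⟨q.swap, hn, interior_subset hqO⟩
  · intro φ hφ u hu p hup
    by_contra hp
    obtain ⟨ψ, hψ, S, hS, hRS⟩ :=
      exists_strictMono_closedConv (fun k => R (φ k)) fun k => hRne p (φ k)
    have hpS : p ∈ S :=
      hRS.2 id strictMono_id (u ∘ ψ) (fun k => hu (ψ k)) p (hup.comp hψ.tendsto_atTop)
    obtain ⟨q, hq, hqS⟩ := (hP S (hPclosed _ (fun k => (hR _).1) S hS hRS)).2.2 p.1 p.2 hpS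
      Sstarᶜ (hSclosed.isOpen_compl.mem_nhds hp)
    exact hqS.2 (swap_mem_of_closedConv hBex hc hrat hRat hSclosed
      (hφ.comp hψ).tendsto_atTop hS hRS hq)

theorem stmt4 {X : Type*} [TopologicalSpace X] [PolishSpace X] [LocallyCompactSpace X]
    (P : Set (Set (X × X)))
    (hP : ∀ R ∈ P, CompleteRel R ∧ IsClosed R ∧ LocallyStrict R)
    (hPclosed : ∀ (R : ℕ → Set (X × X)), (∀ n, R n ∈ P) →
      ∀ S : Set (X × X), IsClosed S → ClosedConv R S → S ∈ P)
    (B : ℕ → Sym2 X) (hBinj : Function.Injective B) (hBex : Exhaustive B)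
    (c : Sym2 X → X) (hc : ∀ z : Sym2 X, c z ∈ z)
    (Sstar : Set (X × X)) (hSstar : Sstar ∈ P)
    (hrat : ∀ x y : X, (c (Sym2.mk x y), x) ∈ Sstar ∧ (c (Sym2.mk x y), y) ∈ Sstar)
    (R : ℕ → Set (X × X))
    (hR : ∀ n, R n ∈ P ∧ RationalizesOn (R n) c B n) :
    ClosedConv R Sstar :=
  stmt4_general P hP hPclosed B hBex c hc Sstar hSstar hrat R hR
end

section
/- On X = R^d_{++} with d ≥ 2, the strict coordinatewise dominance relation ≫ (x ≫ y iff x_i > y_i for all i) is open and irreflexive, and for every x ∈ R^d_{++} and every ε > 0 there exist y, z ∈ R^d_{++} within distance ε of x with y ≫ x and x ≫ z. Consequently, every complete continuous Grodal-transitive preference on R^d_{++} strictly monotone with respect to ≫ is locally strict, and the set of all such preferences is closed in the closed convergence topology. -/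
open Filter Topology MeasureTheory

/-!
Strict monotonicity plus Grodal transitivity propagate strictness along chains
`a ≻ b ⪰ c ≻ e`.  Since every point of the orthant is approximated by points that
dominate it and by points it dominates (scale it by `t → 1`), any weak preference `x ⪰ y`
is approximated by `x' ≻ x ⪰ y ≻ y'`, which gives local strictness.  For a limit `S` of
preferences `Rₙ` in the closed convergence topology, completeness and Grodal transitivity pass
to the limit along subsequences; strict monotonicity survives because, `≫` being open, a
point `m` with `x ≫ m ≫ y` would otherwise produce `m ≻ aₙ ⪰ bₙ ≻ m` in some `Rₙ`.
-/

lemma CompleteRel.refl_mem {X : Type*} {R : Set (X × X)} (hC : CompleteRel R) (x : X) :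
    (x, x) ∈ R :=
  (hC x x).elim id id

lemma GrodalTrans.strictPref_trans {X : Type*} {R : Set (X × X)} (hG : GrodalTrans R)
    (hrefl : ∀ x, (x, x) ∈ R) {a b c e : X} (hab : StrictPref R a b) (hbc : (b, c) ∈ R)
    (hce : StrictPref R c e) : StrictPref R a e := by
  have hac : (a, c) ∈ R := hG a a b c (hrefl a) hab hbc
  exact ⟨hG a c e e hac hce (hrefl e), fun hea => hce.2 (hG e a b c hea hab hbc)⟩

lemma IsOpen.exists_intermediate {X : Type*} [TopologicalSpace X] {D : Set (X × X)}
    (hD : IsOpen D) (hup : ∀ y, ∃ᶠ m in 𝓝 y, (m, y) ∈ D) {x y : X} (hxy : (x, y) ∈ D) :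
    ∃ m, (x, m) ∈ D ∧ (m, y) ∈ D :=
  ((hup y).and_eventually ((Continuous.prodMk_right x).continuousAt.preimage_mem_nhds
    (hD.mem_nhds hxy))).exists.imp fun _ h => h.symm

theorem locallyStrict_of_strictMonoWrt {X : Type*} [TopologicalSpace X]
    {R D : Set (X × X)} (hC : CompleteRel R) (hG : GrodalTrans R) (hM : StrictMonoWrt R D)
    (hup : ∀ x, ∃ᶠ y in 𝓝 x, (y, x) ∈ D)
    (hdown : ∀ x, ∃ᶠ z in 𝓝 x, (x, z) ∈ D) : LocallyStrict R := by
  intro x y hxy V hV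
  have hnear : ∃ᶠ p in 𝓝 (x, y), (p.1, x) ∈ D ∧ (y, p.2) ∈ D := by
    rw [nhds_prod_eq]
    exact frequently_prod_and.2 ⟨hup x, hdown y⟩
  obtain ⟨p, ⟨hpx, hyp⟩, hpV⟩ := (hnear.and_eventually hV).exists
  exact ⟨p, hpV, hG.strictPref_trans hC.refl_mem (hM _ _ hpx) hxy (hM _ _ hyp)⟩

namespace ClosedConv

variable {X : Type*} [TopologicalSpace X] {R : ℕ → Set (X × X)} {S : Set (X × X)}

lemma mem_of_frequently (hRS : ClosedConv R S) {u : ℕ → X × X} {p : X × X}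
    (hu : Tendsto u atTop (𝓝 p)) (hfreq : ∃ᶠ n in atTop, u n ∈ R n) : p ∈ S := by
  obtain ⟨φ, hφ, hmem⟩ := extraction_of_frequently_atTop hfreq
  exact hRS.2 φ hφ (u ∘ φ) hmem p (hu.comp hφ.tendsto_atTop)

lemma completeRel (hRS : ClosedConv R S) (hC : ∀ n, CompleteRel (R n)) : CompleteRel S := by
  intro x y
  have hfreq : ∃ᶠ n in atTop, (x, y) ∈ R n ∨ (y, x) ∈ R n :=
    Frequently.of_forall (hC · x y)
  refine (frequently_or_distrib.1 hfreq).imp ?_ ?_ <;>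
    exact hRS.mem_of_frequently tendsto_const_nhds

lemma grodalTrans (hRS : ClosedConv R S) (hC : ∀ n, CompleteRel (R n))
    (hG : ∀ n, GrodalTrans (R n)) : GrodalTrans S := by
  intro x y z w hxy hyz hzw
  obtain ⟨u, hu, huR⟩ := hRS.1 _ hxy
  obtain ⟨v, hv, hvR⟩ := hRS.1 _ hzw
  -- otherwise `(v n).1 ⪰ (u n).2` eventually, and in the limit `z ⪰ y`
  have hfreq : ∃ᶠ n in atTop, StrictPref (R n) (u n).2 (v n).1 := by
    refine fun hev => hyz.2 (hRS.mem_of_frequently (hv.fst_nhds.prodMk_nhds hu.snd_nhds) ?_)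
    refine (hev.mono fun n hn => ?_).frequently
    exact not_not.1 fun h => hn ⟨(hC n _ _).resolve_right h, h⟩
  obtain ⟨φ, hφ, hstrict⟩ := extraction_of_frequently_atTop hfreq
  refine hRS.2 φ hφ (fun k => ((u (φ k)).1, (v (φ k)).2)) (fun k => ?_) (x, w)
    ((hu.fst_nhds.prodMk_nhds hv.snd_nhds).comp hφ.tendsto_atTop)
  exact hG (φ k) _ _ _ _ (huR (φ k)) (hstrict k) (hvR (φ k))

lemma strictMonoWrt {D : Set (X × X)} (hRS : ClosedConv R S) (hC : ∀ n, CompleteRel (R n))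
    (hG : ∀ n, GrodalTrans (R n)) (hM : ∀ n, StrictMonoWrt (R n) D) (hD : IsOpen D)
    (hup : ∀ y, ∃ᶠ m in 𝓝 y, (m, y) ∈ D) : StrictMonoWrt S D := by
  intro x y hxy
  refine ⟨hRS.mem_of_frequently tendsto_const_nhds
    (Frequently.of_forall fun n => (hM n x y hxy).1), fun hyx => ?_⟩
  obtain ⟨m, hxm, hmy⟩ := hD.exists_intermediate hup hxy
  obtain ⟨u, hu, huR⟩ := hRS.1 _ hyx
  have hev : ∀ᶠ n in atTop, ((u n).2, m) ∈ D ∧ (m, (u n).1) ∈ D :=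
    ((hu.snd_nhds.prodMk_nhds tendsto_const_nhds).eventually_mem (hD.mem_nhds hxm)).and
      ((tendsto_const_nhds.prodMk_nhds hu.fst_nhds).eventually_mem (hD.mem_nhds hmy))
  obtain ⟨n, hum, hmu⟩ := hev.exists
  -- `m ≻ (u n).1 ⪰ (u n).2 ≻ m`
  have hmm := (hG n).strictPref_trans (hC n).refl_mem (hM n _ _ hmu) (huR n) (hM n _ _ hum)
  exact hmm.2 hmm.1

end ClosedConv

abbrev PosOrthant (d : ℕ) := {x : EuclideanSpace ℝ (Fin d) // ∀ i, 0 < x i}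

namespace PosOrthant

def strictDominance (d : ℕ) : Set (PosOrthant d × PosOrthant d) :=
  {p | ∀ i, (p.2 : EuclideanSpace ℝ (Fin d)) i < (p.1 : EuclideanSpace ℝ (Fin d)) i}

variable {d : ℕ}

lemma isOpen_strictDominance : IsOpen (strictDominance d) := by
  have hcoord (i : Fin d) : Continuous fun x : PosOrthant d => (x : EuclideanSpace ℝ (Fin d)) i :=
    (EuclideanSpace.proj i).continuous.comp continuous_subtype_val
  simp only [strictDominance, Set.ofPred_forall]
  exact isOpen_iInter_of_finite fun i =>
    isOpen_lt ((hcoord i).comp continuous_snd) ((hcoord i).comp continuous_fst)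

lemma self_notMem_strictDominance (hd : 0 < d) (x : PosOrthant d) : (x, x) ∉ strictDominance d :=
  fun h => lt_irrefl _ (h ⟨0, hd⟩)

lemma frequently_nhds_of_smul (x : PosOrthant d) {l : Filter ℝ} [l.NeBot] (hl : l ≤ 𝓝 1)
    {P : PosOrthant d → Prop}
    (hP : ∀ᶠ t in l, ∃ ht : 0 < t, P ⟨t • x.1, fun i => mul_pos ht (x.2 i)⟩) :
    ∃ᶠ y in 𝓝 x, P y := by
  rw [nhds_induced, frequently_comap]
  have hlim : Tendsto (fun t : ℝ => t • x.1) l (𝓝 x.1) := by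
    have hcont : Continuous fun t : ℝ => t • x.1 := continuous_id.smul continuous_const
    simpa using (hcont.tendsto 1).mono_left hl
  exact hlim.frequently (hP.frequently.mono fun _ ⟨_, h⟩ => ⟨_, rfl, h⟩)

lemma frequently_strictDominance_left (x : PosOrthant d) :
    ∃ᶠ y in 𝓝 x, (y, x) ∈ strictDominance d := by
  refine x.frequently_nhds_of_smul (l := 𝓝[>] 1) nhdsWithin_le_nhds ?_
  filter_upwards [self_mem_nhdsWithin] with t (ht : 1 < t)
  exact ⟨by linarith, fun i => lt_mul_of_one_lt_left (x.2 i) ht⟩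

lemma frequently_strictDominance_right (x : PosOrthant d) :
    ∃ᶠ z in 𝓝 x, (x, z) ∈ strictDominance d := by
  refine x.frequently_nhds_of_smul (l := 𝓝[<] 1) nhdsWithin_le_nhds ?_
  filter_upwards [Ioo_mem_nhdsLT one_pos] with t ht
  exact ⟨ht.1, fun i => mul_lt_of_lt_one_left (x.2 i) ht.2⟩

end PosOrthant

open PosOrthant

theorem stmt10 (d : ℕ) (hd : 2 ≤ d) :
    let X := {x : EuclideanSpace ℝ (Fin d) // ∀ i, 0 < x i}
    let Dom : Set (X × X) := {p | ∀ i, (p.2 : EuclideanSpace ℝ (Fin d)) i < (p.1 : EuclideanSpace ℝ (Fin d)) i}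
    IsOpen Dom ∧
    (∀ x : X, (x, x) ∉ Dom) ∧
    (∀ x : X, ∀ ε : ℝ, 0 < ε → ∃ y z : X,
      dist y x < ε ∧ dist z x < ε ∧ (y, x) ∈ Dom ∧ (x, z) ∈ Dom) ∧
    (∀ R : Set (X × X), CompleteRel R → IsClosed R → GrodalTrans R →
      StrictMonoWrt R Dom → LocallyStrict R) ∧
    (∀ R : ℕ → Set (X × X),
      (∀ n, CompleteRel (R n) ∧ IsClosed (R n) ∧ GrodalTrans (R n) ∧
        StrictMonoWrt (R n) Dom) →
      ∀ S : Set (X × X), IsClosed S → ClosedConv R S →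
        CompleteRel S ∧ GrodalTrans S ∧ StrictMonoWrt S Dom) := by
  intro X Dom
  refine ⟨isOpen_strictDominance, self_notMem_strictDominance (by omega), fun x ε hε => ?_,
    fun R hC _ hG hM => locallyStrict_of_strictMonoWrt hC hG hM
      frequently_strictDominance_left frequently_strictDominance_right,
    fun R hR S _ hRS => ?_⟩
  · obtain ⟨y, hy, hyx⟩ := Metric.nhds_basis_ball.frequently_iff.1
      (frequently_strictDominance_left x) ε hε
    obtain ⟨z, hz, hxz⟩ := Metric.nhds_basis_ball.frequently_iff.1
      (frequently_strictDominance_right x) ε hε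
    exact ⟨y, z, hy, hz, hyx, hxz⟩
  · have hC n := (hR n).1
    have hG n := (hR n).2.2.1
    exact ⟨hRS.completeRel hC, hRS.grodalTrans hC hG,
      hRS.strictMonoWrt hC hG (fun n => (hR n).2.2.2) isOpen_strictDominance
        frequently_strictDominance_left⟩
end
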